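/- arXiv:2402.16842 — 2 statements merged into one kernel-verified Lean document; each statement's English description precedes it below -/
import Mathlib

section
/- Let Σ ∈ ℝ^{d_in×d_in} be symmetric positive semidefinite with rank(Σ) ≤ r, let Q ∈ ℝ^{r×d_in} be such that Q Σ Qᵀ is invertible, and let U ∈ ℝ^{d_out×r} satisfy Uᵀ U = I_r. Let Δ ∈ ℝ^{d_out×d_in}. Then Tr[Q Σ Δᵀ Δ Σ Qᵀ (Q Σ Qᵀ)^{-1}] = Tr[Δ Σ Δᵀ], and consequently the optimal losses satisfy L(A*, U) = d_out·σ² + Tr[Δ Σ Δᵀ] − Tr[Uᵀ Δ Σ Δᵀ U] ≥ d_out·σ² = L(Q, B*), where B* = Δ Σ Qᵀ (Q Σ Qᵀ)^{-1} and A* = Uᵀ Δ. That is, when the input covariance has rank at most r, tuning only B with any valid frozen A = Q achieves the noise floor, while tuning only A with any frozen orthonormal B = U does no better. -/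
/-!
Write `P = Σ Qᵀ (Q Σ Qᵀ)⁻¹ Q`. Since `Q Σ Qᵀ` is invertible, `Σ Qᵀ` has rank at least `r ≥ rank Σ`,
so `Σ Qᵀ` and `Σ` have the same column space and `P Σ = Σ`. Hence `B* Q = Δ P` leaves residual
`Δ (1 - P)`, which `Σ` annihilates, and `Tr[Q Σ Δᵀ B*] = Tr[Δ P Σ Δᵀ] = Tr[Δ Σ Δᵀ]`. On the other
side `U A* = U Uᵀ Δ` with `1 - U Uᵀ` an orthogonal projection, so the residual loss is
`Tr[Δ Σ Δᵀ] - Tr[Uᵀ Δ Σ Δᵀ U]`, which is nonnegative because `Σ` is positive semidefinite.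
-/

open Matrix

namespace Matrix

theorem range_mulVecLin_mul_eq_of_rank_le {K m n k : Type*} [Field K] [Fintype n] [Fintype k]
    {A : Matrix m n K} {B : Matrix n k K} (h : A.rank ≤ (A * B).rank) :
    LinearMap.range (A * B).mulVecLin = LinearMap.range A.mulVecLin :=
  Submodule.eq_of_le_of_finrank_le
    (by rw [mulVecLin_mul]; exact LinearMap.range_comp_le_range _ _) h

theorem mul_mul_nonsing_inv_mul_mul_self_of_rank_le {K m n k : Type*} [Field K] [Fintype m]
    [Fintype n] [Fintype k] [DecidableEq k] {S : Matrix m n K} {R : Matrix n k K}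
    {Q : Matrix k m K} (hrank : S.rank ≤ Fintype.card k) (hQ : IsUnit (Q * S * R)) :
    S * R * (Q * S * R)⁻¹ * Q * S = S := by
  have hSR : S.rank ≤ (S * R).rank :=
    calc S.rank ≤ Fintype.card k := hrank
      _ = (Q * S * R).rank := (rank_of_isUnit _ hQ).symm
      _ ≤ (S * R).rank := by rw [Matrix.mul_assoc]; exact rank_mul_le_right _ _
  have hcancel : (Q * S * R)⁻¹ * (Q * S * R) = 1 :=
    nonsing_inv_mul _ ((isUnit_iff_isUnit_det _).mp hQ)
  refine ext_iff_mulVec.mpr fun v => ?_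
  obtain ⟨x, hx⟩ : S *ᵥ v ∈ LinearMap.range (S * R).mulVecLin := by
    rw [range_mulVecLin_mul_eq_of_rank_le hSR]; exact ⟨v, rfl⟩
  rw [mulVecLin_apply] at hx
  calc (S * R * (Q * S * R)⁻¹ * Q * S) *ᵥ v = (S * R * (Q * S * R)⁻¹ * Q) *ᵥ (S *ᵥ v) := by
        rw [mulVec_mulVec]
    _ = (S * R * ((Q * S * R)⁻¹ * (Q * S * R))) *ᵥ x := by
        rw [← hx, mulVec_mulVec]; simp only [Matrix.mul_assoc]
    _ = S *ᵥ v := by rw [hcancel, Matrix.mul_one, hx]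

theorem PosSemidef.trace_mul_mul_transpose_nonneg {m n : Type*} [Fintype m] [Fintype n]
    {S : Matrix n n ℝ} (hS : S.PosSemidef) (N : Matrix m n ℝ) : 0 ≤ (N * S * Nᵀ).trace := by
  simpa only [conjTranspose_eq_transpose_of_trivial] using
    (hS.mul_mul_conjTranspose_same N).trace_nonneg

theorem isIdempotentElem_one_sub_mul_transpose {m k : Type*} [Fintype m] [DecidableEq m]
    [Fintype k] [DecidableEq k] {U : Matrix m k ℝ} (hU : Uᵀ * U = 1) :
    IsIdempotentElem (1 - U * Uᵀ) := by
  refine IsIdempotentElem.one_sub ?_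
  rw [IsIdempotentElem, Matrix.mul_assoc, ← Matrix.mul_assoc Uᵀ, hU, Matrix.one_mul]

theorem trace_sub_mul_transpose_mul_mul_transpose {m n k : Type*} [Fintype m] [DecidableEq m]
    [Fintype n] [Fintype k] [DecidableEq k] {U : Matrix m k ℝ} (hU : Uᵀ * U = 1)
    (M : Matrix m n ℝ) (S : Matrix n n ℝ) :
    ((M - U * (Uᵀ * M)) * S * (M - U * (Uᵀ * M))ᵀ).trace
      = (M * S * Mᵀ).trace - (Uᵀ * M * S * Mᵀ * U).trace := by
  set P := 1 - U * Uᵀ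
  have hM : M - U * (Uᵀ * M) = P * M := by
    rw [Matrix.sub_mul, Matrix.one_mul, Matrix.mul_assoc]
  have hP : Pᵀ = P := by simp [P, transpose_sub]
  calc ((M - U * (Uᵀ * M)) * S * (M - U * (Uᵀ * M))ᵀ).trace
      = (P * (M * S * Mᵀ * P)).trace := by
        rw [hM, transpose_mul, hP]; simp only [Matrix.mul_assoc]
    _ = (M * S * Mᵀ * P * P).trace := trace_mul_comm _ _
    _ = (M * S * Mᵀ).trace - (M * S * Mᵀ * U * Uᵀ).trace := by
        rw [Matrix.mul_assoc _ P, (isIdempotentElem_one_sub_mul_transpose hU).eq, Matrix.mul_sub,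
          Matrix.mul_one, trace_sub, Matrix.mul_assoc _ U]
    _ = (M * S * Mᵀ).trace - (Uᵀ * M * S * Mᵀ * U).trace := by
        rw [trace_mul_comm (M * S * Mᵀ * U)]; simp only [Matrix.mul_assoc]

end Matrix

theorem lowrank_asymmetry_deterministic_general
    (d_in d_out r : ℕ) (σ : ℝ)
    (Sig : Matrix (Fin d_in) (Fin d_in) ℝ) (hSig : Sig.PosSemidef)
    (hrank : Sig.rank ≤ r)
    (Δ : Matrix (Fin d_out) (Fin d_in) ℝ)
    (Q : Matrix (Fin r) (Fin d_in) ℝ) (hQ : IsUnit (Q * Sig * Qᵀ))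
    (U : Matrix (Fin d_out) (Fin r) ℝ) (hU : Uᵀ * U = 1)
    (Bstar : Matrix (Fin d_out) (Fin r) ℝ)
    (hBstar : Bstar = Δ * Sig * Qᵀ * (Q * Sig * Qᵀ)⁻¹)
    (Astar : Matrix (Fin r) (Fin d_in) ℝ) (hAstar : Astar = Uᵀ * Δ) :
    (Q * Sig * Δᵀ * Δ * Sig * Qᵀ * (Q * Sig * Qᵀ)⁻¹).trace = (Δ * Sig * Δᵀ).trace ∧
    d_out * σ ^ 2 + ((Δ - U * Astar) * Sig * (Δ - U * Astar)ᵀ).trace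
      = d_out * σ ^ 2 + (Δ * Sig * Δᵀ).trace - (Uᵀ * Δ * Sig * Δᵀ * U).trace ∧
    d_out * σ ^ 2 + (Δ * Sig * Δᵀ).trace - (Uᵀ * Δ * Sig * Δᵀ * U).trace
      ≥ d_out * σ ^ 2 ∧
    d_out * σ ^ 2 + ((Δ - Bstar * Q) * Sig * (Δ - Bstar * Q)ᵀ).trace
      = d_out * σ ^ 2 := by
  have hproj : Sig * Qᵀ * (Q * Sig * Qᵀ)⁻¹ * Q * Sig = Sig :=
    mul_mul_nonsing_inv_mul_mul_self_of_rank_le (by rwa [Fintype.card_fin]) hQ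
  have hfit : (Δ - Bstar * Q) * Sig = 0 := by
    rw [hBstar, Matrix.sub_mul, sub_eq_zero]
    conv_lhs => rw [← hproj]
    simp only [Matrix.mul_assoc]
  have hloss := trace_sub_mul_transpose_mul_mul_transpose hU Δ Sig
  have hnonneg := hSig.trace_mul_mul_transpose_nonneg (Δ - U * (Uᵀ * Δ))
  subst hAstar
  refine ⟨?_, by rw [hloss]; ring, by linarith, by rw [hfit, Matrix.zero_mul, trace_zero, add_zero]⟩
  calc (Q * Sig * Δᵀ * Δ * Sig * Qᵀ * (Q * Sig * Qᵀ)⁻¹).trace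
      = (Q * Sig * Δᵀ * (Δ * Sig * Qᵀ * (Q * Sig * Qᵀ)⁻¹)).trace := by
        simp only [Matrix.mul_assoc]
    _ = (Δ * (Sig * Qᵀ * (Q * Sig * Qᵀ)⁻¹ * Q * Sig) * Δᵀ).trace := by
        rw [trace_mul_comm]; simp only [Matrix.mul_assoc]
    _ = (Δ * Sig * Δᵀ).trace := by rw [hproj]

/-- **Deterministic instance of Theorem 4.3 (A/B output-fit asymmetry).**
If the input covariance `Σ` has rank at most `r`, then
`Tr[Q Σ Δᵀ Δ Σ Qᵀ (Q Σ Qᵀ)⁻¹] = Tr[Δ Σ Δᵀ]`, and the optimal frozen-`B` loss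
`L(A*, U) = d_out σ² + Tr[Δ Σ Δᵀ] − Tr[Uᵀ Δ Σ Δᵀ U]` is at least the optimal
frozen-`A` loss `L(Q, B*) = d_out σ²`. -/
theorem lowrank_asymmetry_deterministic
    (d_in d_out r : ℕ) (hr : r ≤ min d_in d_out) (σ : ℝ) (hσ : 0 ≤ σ)
    (Sig : Matrix (Fin d_in) (Fin d_in) ℝ) (hSig : Sig.PosSemidef)
    (hrank : Sig.rank ≤ r)
    (Δ : Matrix (Fin d_out) (Fin d_in) ℝ)
    (Q : Matrix (Fin r) (Fin d_in) ℝ) (hQ : IsUnit (Q * Sig * Qᵀ))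
    (U : Matrix (Fin d_out) (Fin r) ℝ) (hU : Uᵀ * U = 1)
    (Bstar : Matrix (Fin d_out) (Fin r) ℝ)
    (hBstar : Bstar = Δ * Sig * Qᵀ * (Q * Sig * Qᵀ)⁻¹)
    (Astar : Matrix (Fin r) (Fin d_in) ℝ) (hAstar : Astar = Uᵀ * Δ) :
    (Q * Sig * Δᵀ * Δ * Sig * Qᵀ * (Q * Sig * Qᵀ)⁻¹).trace = (Δ * Sig * Δᵀ).trace ∧
    d_out * σ ^ 2 + ((Δ - U * Astar) * Sig * (Δ - U * Astar)ᵀ).trace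
      = d_out * σ ^ 2 + (Δ * Sig * Δᵀ).trace - (Uᵀ * Δ * Sig * Δᵀ * U).trace ∧
    d_out * σ ^ 2 + (Δ * Sig * Δᵀ).trace - (Uᵀ * Δ * Sig * Δᵀ * U).trace
      ≥ d_out * σ ^ 2 ∧
    d_out * σ ^ 2 + ((Δ - Bstar * Q) * Sig * (Δ - Bstar * Q)ᵀ).trace
      = d_out * σ ^ 2 :=
  lowrank_asymmetry_deterministic_general d_in d_out r σ Sig hSig hrank Δ Q hQ U hU Bstar hBstar
    Astar hAstar
end

section
/- Let F ∈ ℝ^{d_in×r} and Q ∈ ℝ^{r×d_in} be such that Q F ∈ ℝ^{r×r} is invertible. Then for any B ∈ ℝ^{d_out×r}, A ∈ ℝ^{r×d_in}, and any x ∈ ℝ^{d_in} lying in the column space of F (i.e., x = F N for some N ∈ ℝ^r), one has B A x = (B A F (Q F)^{-1}) (Q x). In particular, setting B' = B A F (Q F)^{-1}, the adaptation B' Q agrees with B A on the entire column space of F. -/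
open Matrix

namespace Matrix

variable {m n r R : Type*} [Fintype n] [Fintype r] [DecidableEq r] [CommRing R]

theorem mul_mul_nonsing_inv_mul_mul_cancel (M : Matrix m n R) {F : Matrix n r R}
    {Q : Matrix r n R} (hQF : IsUnit (Q * F)) : M * F * (Q * F)⁻¹ * Q * F = M * F := by
  rw [Matrix.mul_assoc _ Q F,
    nonsing_inv_mul_cancel_right _ _ ((isUnit_iff_isUnit_det _).mp hQF)]

theorem mul_mul_nonsing_inv_mulVec_mulVec_of_mem_range (M : Matrix m n R) {F : Matrix n r R}
    {Q : Matrix r n R} (hQF : IsUnit (Q * F)) {x : n → R} (hx : x ∈ Set.range F.mulVec) :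
    (M * F * (Q * F)⁻¹) *ᵥ (Q *ᵥ x) = M *ᵥ x := by
  obtain ⟨N, rfl⟩ := hx
  rw [mulVec_mulVec, mulVec_mulVec, mulVec_mulVec,
    mul_mul_nonsing_inv_mul_mul_cancel M hQF]

end Matrix

/-- If the inputs lie in the column space of `F` and `Q F` is invertible, then any
LoRA adaptation `B A` agrees on those inputs with the adaptation `B' Q` where the
factor `A` is frozen to `Q` and `B' = B A F (Q F)⁻¹`. -/
theorem frozen_A_equally_expressive_on_colspace
    (d_in d_out r : ℕ)
    (F : Matrix (Fin d_in) (Fin r) ℝ) (Q : Matrix (Fin r) (Fin d_in) ℝ)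
    (hQF : IsUnit (Q * F)) :
    ∀ (B : Matrix (Fin d_out) (Fin r) ℝ) (A : Matrix (Fin r) (Fin d_in) ℝ)
      (x : Fin d_in → ℝ), (∃ N : Fin r → ℝ, x = F *ᵥ N) →
      (B * A) *ᵥ x = (B * A * F * (Q * F)⁻¹) *ᵥ (Q *ᵥ x) := by
  rintro B A x ⟨N, rfl⟩
  exact (mul_mul_nonsing_inv_mulVec_mulVec_of_mem_range (B * A) hQF ⟨N, rfl⟩).symm
end
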